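/- Let P, Q, U, V ∈ ℝ³ be nonzero vectors with P·U = 0 and Q·V = 0, and let α, β ∈ {−1,1}. Write X̂ = X/‖X‖. Define D = αβ (P̂×Û)×(Q̂×V̂) − α (P̂×Q̂) − β (Û×V̂) and d = αβ (P̂×Û)·(Q̂×V̂) − α (P̂·Q̂) − β (Û·V̂) + 1, and set W = (D₃, D₁, D₂, d)ᵀ ∈ ℝ⁴. Then ‖W‖² = 4·W₄ = 4d; in particular d ≥ 0, and W = 0 if and only if d = 0. -/
import Mathlib


open Matrix

/-- Squared-sum Euclidean norm on `ℝ³` (represented as `Fin 3 → ℝ`). -/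
noncomputable def norm3 (v : Fin 3 → ℝ) : ℝ := Real.sqrt (v 0 ^ 2 + v 1 ^ 2 + v 2 ^ 2)

/-- Dot product on `ℝ³`. -/
def dot3 (u v : Fin 3 → ℝ) : ℝ := u 0 * v 0 + u 1 * v 1 + u 2 * v 2

/-- Cross product on `ℝ³`. -/
def cross3 (u v : Fin 3 → ℝ) : Fin 3 → ℝ :=
  ![u 1 * v 2 - u 2 * v 1, u 2 * v 0 - u 0 * v 2, u 0 * v 1 - u 1 * v 0]

/-- The symmetric matrix `M(P,Q,U,V,c)` of the quadratic form associated with a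
general predicate.  Components are indexed `1,2,3` in the paper and `0,1,2` here. -/
noncomputable def Mmat (P Q U V : Fin 3 → ℝ) (c : ℝ) : Matrix (Fin 4) (Fin 4) ℝ :=
  let R : Fin 3 → ℝ := cross3 P Q + cross3 U V
  let T : ℝ := dot3 P Q + dot3 U V
  !![2*(P 2 * Q 2 + U 2 * V 2) - T + c, 2*(P 0 * Q 2 + U 0 * V 2) + R 1,
       2*(P 2 * Q 1 + U 2 * V 1) + R 0, R 2;
     2*(P 0 * Q 2 + U 0 * V 2) + R 1, 2*(P 0 * Q 0 + U 0 * V 0) - T + c,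
       2*(P 1 * Q 0 + U 1 * V 0) + R 2, R 0;
     2*(P 2 * Q 1 + U 2 * V 1) + R 0, 2*(P 1 * Q 0 + U 1 * V 0) + R 2,
       2*(P 1 * Q 1 + U 1 * V 1) - T + c, R 1;
     R 2, R 0, R 1, T + c]

/-- Normalization of a vector in `ℝ³`. -/
noncomputable def nz3 (v : Fin 3 → ℝ) : Fin 3 → ℝ := (norm3 v)⁻¹ • v

lemma norm3_sq (v : Fin 3 → ℝ) : norm3 v ^ 2 = v 0 ^ 2 + v 1 ^ 2 + v 2 ^ 2 :=
  Real.sq_sqrt (by positivity)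

lemma norm3_ne_zero {v : Fin 3 → ℝ} (h : v ≠ 0) : norm3 v ≠ 0 := by
  have hpos : 0 < v 0 ^ 2 + v 1 ^ 2 + v 2 ^ 2 := by
    obtain ⟨i, hi⟩ := Function.ne_iff.mp h
    fin_cases i <;> simp only [Pi.zero_apply] at hi <;> positivity
  have := Real.sqrt_pos.mpr hpos
  unfold norm3; linarith

lemma nz3_dot_self {v : Fin 3 → ℝ} (h : v ≠ 0) : dot3 (nz3 v) (nz3 v) = 1 := by
  have h1 := norm3_sq v
  have h2 := norm3_ne_zero h
  simp only [nz3, dot3, Pi.smul_apply, smul_eq_mul]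
  field_simp
  linear_combination -h1

lemma nz3_dot_orth {x y : Fin 3 → ℝ} (h : dot3 x y = 0) : dot3 (nz3 x) (nz3 y) = 0 := by
  simp only [nz3, dot3, Pi.smul_apply, smul_eq_mul]
  have : (norm3 x)⁻¹ * x 0 * ((norm3 y)⁻¹ * y 0) + (norm3 x)⁻¹ * x 1 * ((norm3 y)⁻¹ * y 1)
      + (norm3 x)⁻¹ * x 2 * ((norm3 y)⁻¹ * y 2)
      = (norm3 x)⁻¹ * (norm3 y)⁻¹ * (x 0 * y 0 + x 1 * y 1 + x 2 * y 2) := by ring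
  rw [this]
  simp only [dot3] at h
  rw [h, mul_zero]

lemma key (p q u v : Fin 3 → ℝ) (a b : ℝ) (ha : a ^ 2 = 1) (hb : b ^ 2 = 1)
    (hp : dot3 p p = 1) (hq : dot3 q q = 1) (hu : dot3 u u = 1) (hv : dot3 v v = 1)
    (hpu : dot3 p u = 0) (hqv : dot3 q v = 0) (D : Fin 3 → ℝ) (d : ℝ)
    (hD : D = (a * b) • cross3 (cross3 p u) (cross3 q v) - a • cross3 p q - b • cross3 u v)
    (hd : d = a * b * dot3 (cross3 p u) (cross3 q v) - a * dot3 p q - b * dot3 u v + 1) :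
    D 2 ^ 2 + D 0 ^ 2 + D 1 ^ 2 + d ^ 2 = 4 * d := by
  subst hd
  set A := cross3 (cross3 p u) (cross3 q v) with hA
  have hG : dot3 (cross3 p u) (cross3 q v)
      = dot3 p q * dot3 u v - dot3 p v * dot3 u q := by
    simp [dot3, cross3]; ring
  have hAA : dot3 A A = 1 - (dot3 p q * dot3 u v - dot3 p v * dot3 u q) ^ 2 := by
    have e : dot3 A A = (dot3 p p * dot3 u u - dot3 p u ^ 2) * (dot3 q q * dot3 v v - dot3 q v ^ 2)
        - (dot3 p q * dot3 u v - dot3 p v * dot3 u q) ^ 2 := by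
      simp [hA, dot3, cross3]; ring
    rw [e, hp, hq, hu, hv, hpu, hqv]; ring
  have e2' : dot3 A (cross3 p q)
      = dot3 u v - dot3 p q * (dot3 p q * dot3 u v - dot3 p v * dot3 u q) := by
    have e : dot3 A (cross3 p q)
        = -(dot3 p v * (dot3 p u * dot3 q q - dot3 u q * dot3 p q)
          - dot3 p p * (dot3 u v * dot3 q q - dot3 u q * dot3 q v)
          + dot3 p q * (dot3 u v * dot3 p q - dot3 p u * dot3 q v)) := by
      simp [hA, dot3, cross3]; ring
    rw [e, hp, hq, hpu, hqv]; ring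
  have e3' : dot3 A (cross3 u v)
      = dot3 p q - dot3 u v * (dot3 p q * dot3 u v - dot3 p v * dot3 u q) := by
    have e : dot3 A (cross3 u v)
        = dot3 p q * (dot3 u u * dot3 v v - dot3 u v ^ 2)
          - dot3 p u * (dot3 u q * dot3 v v - dot3 u v * dot3 q v)
          + dot3 p v * (dot3 u q * dot3 u v - dot3 u u * dot3 q v) := by
      simp [hA, dot3, cross3]; ring
    rw [e, hu, hv, hpu, hqv]; ring
  have e4' : dot3 (cross3 p q) (cross3 u v) = -(dot3 p v * dot3 u q) := by
    have e : dot3 (cross3 p q) (cross3 u v)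
        = dot3 p u * dot3 q v - dot3 p v * dot3 u q := by
      simp [dot3, cross3]; ring
    rw [e, hpu, hqv]; ring
  have e5' : dot3 (cross3 p q) (cross3 p q) = 1 - dot3 p q ^ 2 := by
    have e : dot3 (cross3 p q) (cross3 p q) = dot3 p p * dot3 q q - dot3 p q ^ 2 := by
      simp [dot3, cross3]; ring
    rw [e, hp, hq]; ring
  have e6' : dot3 (cross3 u v) (cross3 u v) = 1 - dot3 u v ^ 2 := by
    have e : dot3 (cross3 u v) (cross3 u v) = dot3 u u * dot3 v v - dot3 u v ^ 2 := by
      simp [dot3, cross3]; ring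
    rw [e, hu, hv]; ring
  have hDsq : D 0 ^ 2 + D 1 ^ 2 + D 2 ^ 2
      = a ^ 2 * b ^ 2 * dot3 A A + a ^ 2 * dot3 (cross3 p q) (cross3 p q)
        + b ^ 2 * dot3 (cross3 u v) (cross3 u v)
        - 2 * a ^ 2 * b * dot3 A (cross3 p q) - 2 * a * b ^ 2 * dot3 A (cross3 u v)
        + 2 * a * b * dot3 (cross3 p q) (cross3 u v) := by
    subst hD
    simp only [Pi.sub_apply, Pi.smul_apply, smul_eq_mul, dot3]
    ring
  rw [hG]
  linear_combination hDsq + (a ^ 2 * b ^ 2) * hAA + a ^ 2 * e5' + b ^ 2 * e6'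
    - (2 * a ^ 2 * b) * e2' - (2 * a * b ^ 2) * e3' + (2 * a * b) * e4'
    + (1 - 2 * b * dot3 u v + b ^ 2) * ha + (2 - 2 * a * dot3 p q) * hb

/-- for the eigenvector `W = (D₃, D₁, D₂, d)` of the ellipsoidal case,
`‖W‖² = 4·W₄ = 4d`; in particular `d ≥ 0`, and `W = 0` iff `d = 0`. -/
theorem statement10 (P Q U V : Fin 3 → ℝ)
    (hP : P ≠ 0) (hQ : Q ≠ 0) (hU : U ≠ 0) (hV : V ≠ 0)
    (hPU : dot3 P U = 0) (hQV : dot3 Q V = 0)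
    (α β : ℝ) (hα : α = -1 ∨ α = 1) (hβ : β = -1 ∨ β = 1)
    (D : Fin 3 → ℝ) (d : ℝ)
    (hD : D = (α * β) • cross3 (cross3 (nz3 P) (nz3 U)) (cross3 (nz3 Q) (nz3 V))
            - α • cross3 (nz3 P) (nz3 Q) - β • cross3 (nz3 U) (nz3 V))
    (hd : d = α * β * dot3 (cross3 (nz3 P) (nz3 U)) (cross3 (nz3 Q) (nz3 V))
            - α * dot3 (nz3 P) (nz3 Q) - β * dot3 (nz3 U) (nz3 V) + 1) :
    (D 2) ^ 2 + (D 0) ^ 2 + (D 1) ^ 2 + d ^ 2 = 4 * d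
    ∧ 0 ≤ d
    ∧ ((![D 2, D 0, D 1, d] : Fin 4 → ℝ) = 0 ↔ d = 0) := by
  have ha : α ^ 2 = 1 := by rcases hα with rfl | rfl <;> norm_num
  have hb : β ^ 2 = 1 := by rcases hβ with rfl | rfl <;> norm_num
  have h1 := key (nz3 P) (nz3 Q) (nz3 U) (nz3 V) α β ha hb
    (nz3_dot_self hP) (nz3_dot_self hQ) (nz3_dot_self hU) (nz3_dot_self hV)
    (nz3_dot_orth hPU) (nz3_dot_orth hQV) D d hD hd
  refine ⟨h1, ?_, ?_, ?_⟩
  · nlinarith [sq_nonneg (D 0), sq_nonneg (D 1), sq_nonneg (D 2), sq_nonneg d, sq_nonneg (d - 2)]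
  · intro h
    have := congrFun h 3
    simpa using this
  · intro h0
    have hD2 : D 2 = 0 := by nlinarith [sq_nonneg (D 0), sq_nonneg (D 1)]
    have hD0 : D 0 = 0 := by nlinarith [sq_nonneg (D 1), sq_nonneg (D 2)]
    have hD1 : D 1 = 0 := by nlinarith [sq_nonneg (D 0), sq_nonneg (D 2)]
    funext i
    fin_cases i <;> simp [hD0, hD1, hD2, h0]
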